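/- In a metric graph of highway dimension 1, if x and y are two distinct hubs of a shortest path cover SPC(r) lying in the same connected component of G_{≤2r}, and P is a path in G_{≤2r} from x to y containing no other hubs of SPC(r), then every edge of P not incident to x or y has length at most r. -/

import Mathlib

/-!
An edge of `P` is an edge of `G` of weight at most `2r`, and in a metric graph it is a shortest
path between its endpoints. If its weight exceeded `r`, the cover would put a hub on one of those
endpoints; that hub lies on `P`, so it is `x` or `y`.
-/

open SimpleGraph Set

namespace HD

variable {V : Type*}

/-- Weighted length of a walk: sum of the weights of its edges. -/
noncomputable def wlen (w : Sym2 V → ℝ) {G : SimpleGraph V} {u v : V} (p : G.Walk u v) : ℝ :=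
  (p.darts.map fun d => w d.edge).sum

/-- Shortest-path distance in a weighted graph. -/
noncomputable def gdist (G : SimpleGraph V) (w : Sym2 V → ℝ) (u v : V) : ℝ :=
  sInf {L | ∃ p : G.Walk u v, wlen w p = L}

/-- Ball of radius `r` around `v`. -/
def ball (G : SimpleGraph V) (w : Sym2 V → ℝ) (v : V) (r : ℝ) : Set V :=
  {u | gdist G w v u ≤ r}

/-- `S` is a shortest path cover for scale `r`: it hits (the vertex set of) every
shortest path of length in `(r, 2r]`. -/
def IsSPC (G : SimpleGraph V) (w : Sym2 V → ℝ) (S : Set V) (r : ℝ) : Prop :=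
  ∀ u v : V, ∀ p : G.Walk u v, p.IsPath → wlen w p = gdist G w u v →
    r < wlen w p → wlen w p ≤ 2 * r → ∃ x ∈ S, x ∈ p.support

/-- `S` is locally `h`-sparse for scale `r`: every ball of radius `2r` contains
at most `h` vertices of `S`. -/
def Sparse (G : SimpleGraph V) (w : Sym2 V → ℝ) (S : Set V) (r : ℝ) (h : ℕ) : Prop :=
  ∀ v : V, (S ∩ ball G w v (2 * r)).ncard ≤ h

/-- The highway dimension of `(G, w)` is at most `h`: for every scale there
is a locally `h`-sparse shortest path cover. -/
def HDLe (G : SimpleGraph V) (w : Sym2 V → ℝ) (h : ℕ) : Prop :=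
  ∀ r : ℝ, 0 < r → ∃ S : Set V, IsSPC G w S r ∧ Sparse G w S r h

/-- A metric graph: edge weights are positive and every edge is a shortest
path between its endpoints. -/
def MetricGraph (G : SimpleGraph V) (w : Sym2 V → ℝ) : Prop :=
  (∀ e ∈ G.edgeSet, 0 < w e) ∧ ∀ u v : V, G.Adj u v → gdist G w u v = w s(u, v)

/-- The subgraph `G_{≤ t}` spanned by all edges of weight at most `t`. -/
def leSub (G : SimpleGraph V) (w : Sym2 V → ℝ) (t : ℝ) : SimpleGraph V where
  Adj u v := G.Adj u v ∧ w s(u, v) ≤ t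
  symm := by
    constructor
    intro u v hv
    obtain ⟨h1, h2⟩ := hv
    exact ⟨h1.symm, by rwa [Sym2.eq_swap] at h2⟩
  loopless := ⟨fun v hv => G.irrefl hv.1⟩

/-- A tree decomposition of `G`: a tree `T` on index type `ι` with bags covering
all vertices and all edges, such that the bags containing any fixed vertex induce
a connected subtree. -/
def IsTreeDecomp (G : SimpleGraph V) {ι : Type*} (T : SimpleGraph ι) (bag : ι → Set V) : Prop :=
  T.IsTree ∧ (∀ v : V, ∃ i, v ∈ bag i) ∧
    (∀ u v : V, G.Adj u v → ∃ i, u ∈ bag i ∧ v ∈ bag i) ∧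
    ∀ v : V, (T.induce {i | v ∈ bag i}).Connected

variable {G : SimpleGraph V} {w : Sym2 V → ℝ}

theorem mem_edgeSet_leSub {t : ℝ} {e : Sym2 V} :
    e ∈ (leSub G w t).edgeSet ↔ e ∈ G.edgeSet ∧ w e ≤ t := by
  induction e using Sym2.ind with
  | h u v => exact Iff.rfl

theorem wlen_toWalk {u v : V} (h : G.Adj u v) : wlen w h.toWalk = w s(u, v) := by
  simp [wlen, h.darts_toWalk]

theorem IsSPC.exists_mem_of_mem_edgeSet {S : Set V} {r : ℝ} (hS : IsSPC G w S r)
    (hmet : MetricGraph G w) {e : Sym2 V} (he : e ∈ G.edgeSet) (hlt : r < w e)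
    (hle : w e ≤ 2 * r) : ∃ z ∈ e, z ∈ S := by
  induction e using Sym2.ind with
  | h u v =>
    rw [mem_edgeSet] at he
    have hshort : wlen w he.toWalk = gdist G w u v := by
      rw [wlen_toWalk, hmet.2 u v he]
    obtain ⟨z, hzS, hz⟩ := hS u v he.toWalk he.isPath_toWalk hshort
      (by rwa [wlen_toWalk]) (by rwa [wlen_toWalk])
    rw [he.support_toWalk, List.mem_pair] at hz
    exact ⟨z, by rcases hz with rfl | rfl <;> simp, hzS⟩

end HD

theorem stmt6_general {V : Type*} (G : SimpleGraph V) (w : Sym2 V → ℝ)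
    (hmet : HD.MetricGraph G w)
    (r : ℝ) (S : Set V) (hspc : HD.IsSPC G w S r)
    (x y : V)
    (p : (HD.leSub G w (2 * r)).Walk x y)
    (hnohub : ∀ z ∈ p.support, z ∈ S → z = x ∨ z = y) :
    ∀ e ∈ p.edges, x ∉ e → y ∉ e → w e ≤ r := by
  intro e he hxe hye
  obtain ⟨heG, hle⟩ := HD.mem_edgeSet_leSub.1 (p.edges_subset_edgeSet he)
  by_contra! hlt
  obtain ⟨z, hze, hzS⟩ := hspc.exists_mem_of_mem_edgeSet hmet heG hlt hle
  rcases hnohub z (p.mem_support_of_mem_edges he hze) hzS with rfl | rfl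
  exacts [hxe hze, hye hze]

/-- If `x ≠ y` are hubs of a shortest path cover `S` for scale `r` in the
same component of `G_{≤2r}` and `P` is a path in `G_{≤2r}` from `x` to `y` containing no
other hub of `S`, then every edge of `P` not incident to `x` or `y` has length at
most `r`. -/
theorem stmt6 {V : Type*} (G : SimpleGraph V) (w : Sym2 V → ℝ)
    (hmet : HD.MetricGraph G w) (hhd : HD.HDLe G w 1)
    (r : ℝ) (hr : 0 < r) (S : Set V) (hspc : HD.IsSPC G w S r)
    (x y : V) (hx : x ∈ S) (hy : y ∈ S) (hxy : x ≠ y)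
    (p : (HD.leSub G w (2 * r)).Walk x y) (hp : p.IsPath)
    (hnohub : ∀ z ∈ p.support, z ∈ S → z = x ∨ z = y) :
    ∀ e ∈ p.edges, x ∉ e → y ∉ e → w e ≤ r :=
  stmt6_general G w hmet r S hspc x y p hnohub
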